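/- Let C be an additive category and M a multiplicative system in C, with localization functor L : C ⥤ C_M. For an object X of C, the image L X is a zero object of C_M if and only if the unique morphism X ⟶ 0 (into a zero object of C) belongs to M, and this holds if and only if the unique morphism 0 ⟶ X belongs to M. -/

import Mathlib

open CategoryTheory

/-- A multiplicative system in the sense of Definition `DefAppMult` (Fr1–Fr4). -/
structure IsMultiplicativeSystem {C : Type*} [Category C] (M : MorphismProperty C) : Prop where
  fr1 : ∀ X : C, M (𝟙 X)
  fr2 : ∀ ⦃X Y Z W : C⦄ (f : X ⟶ Y) (g : Y ⟶ Z) (h : Z ⟶ W),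
    M (f ≫ g) → M (g ≫ h) → M f ∧ M g ∧ M h ∧ M (f ≫ g ≫ h)
  fr3 : ∀ ⦃X Y : C⦄ (f g : X ⟶ Y),
    (∃ (X' : C) (s : X' ⟶ X), M s ∧ s ≫ f = s ≫ g) ↔
    (∃ (Y' : C) (t : Y ⟶ Y'), M t ∧ f ≫ t = g ≫ t)
  fr4 : ∀ ⦃X Y X' : C⦄ (s : X ⟶ Y) (f : X ⟶ X'), M s →
    ∃ (Y' : C) (s' : X' ⟶ Y') (f' : Y ⟶ Y'), M s' ∧ s ≫ f' = f ≫ s'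
  fr4' : ∀ ⦃Y Y' X' : C⦄ (f' : Y ⟶ Y') (s' : X' ⟶ Y'), M s' →
    ∃ (X : C) (s : X ⟶ Y) (f : X ⟶ X'), M s ∧ s ≫ f' = f ≫ s'

open CategoryTheory.Limits ZeroObject

/-!
A zero morphism `X ⟶ Y` in `M` factors as `X ⟶ 0 ⟶ Y`, and `0 ⟶ Y ⟶ 0` is the identity, so by
Fr2 both `X ⟶ 0` and `0 ⟶ Y` lie in `M`. Hence `X ⟶ 0 ∈ M` says that some zero morphism out of
`X` lies in `M`, which by Fr3 (applied to `𝟙 X` and `0`) is equivalent to some zero morphism into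
`X` lying in `M`, i.e. to `0 ⟶ X ∈ M`. By the left calculus of fractions, `L X` is zero iff
`L (𝟙 X) = L 0` iff `𝟙 X ≫ s = 0 ≫ s` for some `s ∈ M`, i.e. some zero morphism out of `X` lies
in `M`.
-/

namespace IsMultiplicativeSystem

variable {C : Type*} [Category C] {M : MorphismProperty C} (hM : IsMultiplicativeSystem M)
include hM

lemma isMultiplicative : M.IsMultiplicative where
  id_mem := hM.fr1
  comp_mem f g hf hg := by
    simpa using (hM.fr2 f (𝟙 _) g (by simpa using hf) (by simpa using hg)).2.2.2

lemma hasLeftCalculusOfFractions : M.HasLeftCalculusOfFractions :=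
  have := hM.isMultiplicative
  { exists_leftFraction := fun _ _ φ => by
      obtain ⟨_, s', f', hs', fac⟩ := hM.fr4 φ.s φ.f φ.hs
      exact ⟨⟨f', s', hs'⟩, fac.symm⟩
    ext := fun X' _ _ f₁ f₂ s hs fac => by
      obtain ⟨Y', t, ht, fac'⟩ := (hM.fr3 f₁ f₂).1 ⟨X', s, hs, fac⟩
      exact ⟨Y', t, ht, fac'⟩ }

section ZeroMorphisms

variable [HasZeroMorphisms C]

lemma exists_mem_zero_to_iff_exists_mem_zero_from (X : C) :
    (∃ Y, M (0 : Y ⟶ X)) ↔ ∃ Y, M (0 : X ⟶ Y) := by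
  simpa only [Category.comp_id, Category.id_comp, comp_zero, zero_comp, exists_eq_right]
    using hM.fr3 (𝟙 X) 0

variable [HasZeroObject C]

lemma mem_zero_toZero_and_fromZero {X Y : C} (h : M (0 : X ⟶ Y)) :
    M (0 : X ⟶ 0) ∧ M (0 : (0 : C) ⟶ Y) := by
  have hXY : M ((0 : X ⟶ 0) ≫ (0 : (0 : C) ⟶ Y)) := by simpa using h
  have h0 : M ((0 : (0 : C) ⟶ Y) ≫ (0 : Y ⟶ 0)) := by
    simpa only [(isZero_zero C).eq_of_src _ (𝟙 _)] using hM.fr1 (0 : C)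
  obtain ⟨hX, hY, -⟩ := hM.fr2 _ _ _ hXY h0
  exact ⟨hX, hY⟩

lemma mem_zero_toZero_iff (X : C) : M (0 : X ⟶ 0) ↔ ∃ Y, M (0 : X ⟶ Y) :=
  ⟨fun h => ⟨0, h⟩, fun ⟨_, h⟩ => (hM.mem_zero_toZero_and_fromZero h).1⟩

lemma mem_zero_fromZero_iff (X : C) : M (0 : (0 : C) ⟶ X) ↔ ∃ Y, M (0 : Y ⟶ X) :=
  ⟨fun h => ⟨0, h⟩, fun ⟨_, h⟩ => (hM.mem_zero_toZero_and_fromZero h).2⟩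

lemma mem_zero_toZero_iff_mem_zero_fromZero (X : C) :
    M (0 : X ⟶ 0) ↔ M (0 : (0 : C) ⟶ X) := by
  rw [hM.mem_zero_toZero_iff, hM.mem_zero_fromZero_iff,
    hM.exists_mem_zero_to_iff_exists_mem_zero_from]

end ZeroMorphisms

lemma isZero_Q_obj_iff [Preadditive C] [HasZeroObject C] (X : C) :
    IsZero (M.Q.obj X) ↔ M (0 : X ⟶ 0) := by
  have := hM.hasLeftCalculusOfFractions
  constructor
  · intro hQX
    obtain ⟨Y, s, hs, fac⟩ := (MorphismProperty.map_eq_iff_postcomp M.Q M (𝟙 X) 0).1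
      (hQX.eq_of_src _ _)
    rw [Category.id_comp, zero_comp] at fac
    exact (hM.mem_zero_toZero_iff X).2 ⟨Y, fac ▸ hs⟩
  · intro h
    have := Localization.inverts M.Q M _ h
    exact (M.Q.map_isZero (isZero_zero C)).of_iso (asIso (M.Q.map (0 : X ⟶ 0)))

end IsMultiplicativeSystem

theorem stmt_15_general {C : Type*} [Category C] [Preadditive C] [HasZeroObject C]
    (M : MorphismProperty C) (hM : IsMultiplicativeSystem M) (X : C) :
    (IsZero (M.Q.obj X) ↔ M (0 : X ⟶ 0)) ∧
    (M (0 : X ⟶ 0) ↔ M (0 : (0 : C) ⟶ X)) :=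
  ⟨hM.isZero_Q_obj_iff X, hM.mem_zero_toZero_iff_mem_zero_fromZero X⟩

/-- Remark `RemA2.(1)`: let `C` be an additive category and `M` a multiplicative system
in `C` with localisation functor `L = M.Q`. For an object `X` of `C`, the image `L X` is
a zero object of `C_M` if and only if the unique morphism `X ⟶ 0` lies in `M`, and this
holds if and only if the unique morphism `0 ⟶ X` lies in `M`. -/
theorem stmt_15 {C : Type*} [Category C] [Preadditive C] [HasZeroObject C]
    [HasFiniteBiproducts C]
    (M : MorphismProperty C) (hM : IsMultiplicativeSystem M) (X : C) :
    (IsZero (M.Q.obj X) ↔ M (0 : X ⟶ 0)) ∧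
    (M (0 : X ⟶ 0) ↔ M (0 : (0 : C) ⟶ X)) :=
  stmt_15_general M hM X
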